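/- arXiv:1208.2140 — 11 statements merged into one kernel-verified Lean document; each statement's English description precedes it below -/
import Mathlib

section
/- For every infinite cardinal λ there exists a family F of 2^λ functions from λ onto λ that is independent: for every finite collection of distinct f₀,…,f_{n−1} ∈ F and every choice of values j₀,…,j_{n−1} < λ, the set {η < λ : f_i(η) = j_i for all i < n} is nonempty. -/
/-!
Index the functions by the subsets `A ⊆ λ` and replace the domain `λ` by the set of pairs
`(u, e)` with `u ⊆ λ` finite and `e` a table from the subsets of `u` to `λ`; there are still
only `λ` such pairs. Put `f_A (u, e) = e (A ∩ u)`. Finitely many distinct sets `A₀, …, Aₙ₋₁`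
are already separated by a finite `u`, so their traces `Aᵢ ∩ u` are distinct and a single
table `e` can send each of them to the prescribed value `jᵢ`.
-/

open Cardinal Function

universe u

def IsIndependentFamily {ι α β : Type*} (F : ι → α → β) : Prop :=
  ∀ (s : Finset ι) (j : ι → β), ∃ a, ∀ i ∈ s, F i a = j i

namespace IsIndependentFamily

variable {ι α β γ : Type*} {F : ι → α → β}

theorem surjective (hF : IsIndependentFamily F) (i : ι) : Surjective (F i) := fun b =>
  (hF {i} fun _ => b).imp fun _ h => h i (Finset.mem_singleton_self i)

theorem injective [Nontrivial β] (hF : IsIndependentFamily F) : Injective F := by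
  classical
  intro i i' hFi
  by_contra hne
  obtain ⟨b, b', hb⟩ := exists_pair_ne β
  obtain ⟨a, ha⟩ := hF {i, i'} fun k => if k = i then b else b'
  have hi := ha i (by simp)
  have hi' := ha i' (by simp)
  rw [if_pos rfl] at hi
  rw [if_neg (Ne.symm hne), ← hFi, hi] at hi'
  exact hb hi'

theorem comp_surjective (hF : IsIndependentFamily F) {g : γ → α} (hg : Surjective g) :
    IsIndependentFamily fun i => F i ∘ g := fun s j =>
  let ⟨a, ha⟩ := hF s j
  ⟨(hg a).choose, fun i hi => by simp only [comp_apply, (hg a).choose_spec, ha i hi]⟩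

theorem exists_forall_mem_finset_eq (hF : IsIndependentFamily F) (hinj : Injective F)
    (s : Finset (α → β)) (hs : ↑s ⊆ Set.range F) (j : (α → β) → β) :
    ∃ a, ∀ f ∈ s, f a = j f := by
  obtain ⟨a, ha⟩ := hF (s.preimage F hinj.injOn) (j ∘ F)
  refine ⟨a, fun f hf => ?_⟩
  obtain ⟨i, rfl⟩ := hs hf
  exact ha i (Finset.mem_preimage.mpr hf)

end IsIndependentFamily

theorem exists_finset_injOn_preimage_val {I : Type*} (s : Finset (Set I)) :
    ∃ u : Finset I, Set.InjOn (fun A : Set I => ((↑) : u → I) ⁻¹' A) s := by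
  classical
  rcases isEmpty_or_nonempty I with hI | hI
  · exact ⟨∅, fun A _ B _ _ => Subsingleton.elim A B⟩
  have hsep (A B : Set I) (hAB : A ≠ B) : (symmDiff A B).Nonempty :=
    Set.nonempty_iff_ne_empty.2 (symmDiff_eq_bot.not.2 hAB)
  choose! w hw using hsep
  refine ⟨(s ×ˢ s).image fun p => w p.1 p.2, fun A hA B hB hAB => ?_⟩
  by_contra hne
  have hwu : w A B ∈ (s ×ˢ s).image fun p => w p.1 p.2 :=
    Finset.mem_image.mpr ⟨(A, B), Finset.mem_product.mpr ⟨hA, hB⟩, rfl⟩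
  have hmem := congrArg (⟨w A B, hwu⟩ ∈ ·) hAB
  simp only [Set.mem_preimage, eq_iff_iff] at hmem
  rcases hw A B hne with ⟨hwA, hwB⟩ | ⟨hwB, hwA⟩
  · exact hwB (hmem.mp hwA)
  · exact hwA (hmem.mpr hwB)

/-- A point is a finite window `u ⊆ I` with a table of values indexed by the traces `A ∩ u`;
`lookup A` reads the entry of the trace of `A`. -/
def TraceTable (I J : Type*) := Σ u : Finset I, (Set u → J)

namespace TraceTable

def lookup {I J : Type*} (A : Set I) (d : TraceTable I J) : J :=
  d.2 (((↑) : d.1 → I) ⁻¹' A)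

theorem isIndependentFamily_lookup {I J : Type*} [Nonempty J] :
    IsIndependentFamily (lookup : Set I → TraceTable I J → J) := by
  intro s j
  obtain ⟨u, hu⟩ := exists_finset_injOn_preimage_val s
  exact ⟨⟨u, j ∘ invFunOn (fun A : Set I => ((↑) : u → I) ⁻¹' A) s⟩,
    fun A hA => congrArg j (hu.leftInvOn_invFunOn hA)⟩

end TraceTable

theorem mk_traceTable_of_infinite {I : Type u} [Infinite I] : #(TraceTable I I) = #I := by
  have hfiber (u : Finset I) : #(Set u → I) ≤ #I := by
    rw [mk_arrow, lift_id, lift_id]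
    exact pow_le (aleph0_le_mk I) (lt_aleph0_of_finite _)
  refine le_antisymm ?_ <| mk_le_of_injective (f := fun i : I => (⟨∅, fun _ => i⟩ : TraceTable I I))
    fun i i' h => congrArg (TraceTable.lookup ∅) h
  calc #(TraceTable I I) ≤ sum fun _ : Finset I => #I :=
        (mk_sigma _).trans_le (sum_le_sum _ _ hfiber)
    _ = #I := by rw [sum_const', mk_finset_of_infinite, mul_eq_self (aleph0_le_mk I)]

/-- **Engelking–Karłowicz theorem (independent families).**
For every infinite cardinal `λ` (here represented by an infinite type `I` of that
cardinality) there is a family `F` of `2 ^ λ` functions from `λ` onto `λ` which is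
independent: every finite system of constraints `f η = j f`, for distinct `f ∈ F`
and arbitrary prescribed values `j f`, has a solution `η`. -/
theorem engelking_karlowicz_independent_family {I : Type u} [Infinite I] :
    ∃ F : Set (I → I),
      Cardinal.mk F = 2 ^ Cardinal.mk I ∧
      (∀ f ∈ F, Function.Surjective f) ∧
      ∀ s : Finset (I → I), ↑s ⊆ F → ∀ j : (I → I) → I,
        ∃ η : I, ∀ f ∈ s, f η = j f := by
  obtain ⟨e⟩ := Cardinal.eq.mp (mk_traceTable_of_infinite (I := I))
  have hF : IsIndependentFamily fun A : Set I => TraceTable.lookup A ∘ e.symm :=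
    TraceTable.isIndependentFamily_lookup.comp_surjective e.symm.surjective
  refine ⟨Set.range _, ?_, ?_, hF.exists_forall_mem_finset_eq hF.injective⟩
  · rw [mk_range_eq _ hF.injective, mk_set]
  · rintro _ ⟨A, rfl⟩
    exact hF.surjective A
end

section
/- Let μ be an infinite cardinal. The product of at most 2^μ topological spaces, each containing a dense subset of cardinality at most μ, contains a dense subset of cardinality at most μ. -/
/-!
Fix a set `M` of size `μ`. Each factor has a dense-range map `f i : M → X i`, and the index set
embeds into `M → Bool`, say `i ↦ A i`. Call `x : ι → M` finitely determined if `x i` only depends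
on the restriction of `A i` to some finite `E ⊆ M`. Finitely many distinct `A i` are already
distinguished on a finite set, so finitely determined maps interpolate any `x : ι → M` on any finite
set of indices and hence are dense in the product. There are at most
`#(Finset M) * μ ^ (finite) = μ` of them, and composing with the `f i` gives the dense set.
-/

universe u

open Cardinal Set Function

theorem Dense.exists_denseRange_of_mk_le {X M : Type u} [TopologicalSpace X] [Nonempty X]
    {s : Set X} (hs : Dense s) (h : #s ≤ #M) : ∃ f : M → X, DenseRange f := by
  obtain ⟨e⟩ := Cardinal.le_def _ _ |>.1 h
  have : Nonempty s := hs.nonempty.to_subtype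
  exact ⟨(↑) ∘ invFun e,
    hs.denseRange_val.comp (invFun_surjective e.injective).denseRange continuous_subtype_val⟩

theorem dense_of_forall_finset_exists_eqOn {ι : Type*} {X : ι → Type*}
    [∀ i, TopologicalSpace (X i)] {D : Set (∀ i, X i)}
    (hD : ∀ (I : Finset ι) (x : ∀ i, X i), ∃ y ∈ D, ∀ i ∈ I, y i = x i) : Dense D := by
  refine dense_iff_inter_open.2 fun U hU ⟨x, hx⟩ => ?_
  obtain ⟨I, u, hxu, hIU⟩ := isOpen_pi_iff.1 hU x hx
  obtain ⟨y, hyD, hyx⟩ := hD I x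
  exact ⟨y, hIU fun i hi => hyx i hi ▸ (hxu i hi).2, hyD⟩

theorem exists_finset_injOn_restrict {ι M β : Type*} {A : ι → M → β} {I : Finset ι}
    (hA : InjOn A I) : ∃ E : Finset M, InjOn (fun i => E.restrict (A i)) I := by
  classical
  let witness (i j : ι) : Finset M :=
    if h : ∃ m, A i m ≠ A j m then {h.choose} else ∅
  refine ⟨I.biUnion fun i => I.biUnion (witness i), fun i hi j hj hij => hA hi hj ?_⟩
  by_contra hne
  have h : ∃ m, A i m ≠ A j m := ne_iff.1 hne
  have hmem : h.choose ∈ I.biUnion fun i => I.biUnion (witness i) :=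
    Finset.mem_biUnion.2 ⟨i, hi, Finset.mem_biUnion.2 ⟨j, hj, by simp [witness, h]⟩⟩
  exact h.choose_spec (congrFun hij ⟨_, hmem⟩)

section FinitelyDetermined

variable {ι M α β : Type*}

def finitelyDetermined (A : ι → M → β) : Set (ι → α) :=
  range fun p : Σ E : Finset M, (E → β) → α => fun i => p.2 (p.1.restrict (A i))

theorem exists_mem_finitelyDetermined_eqOn [Nonempty α] {A : ι → M → β} (hA : Injective A)
    (I : Finset ι) (x : ι → α) : ∃ y ∈ finitelyDetermined A, ∀ i ∈ I, y i = x i := by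
  obtain ⟨E, hE⟩ := exists_finset_injOn_restrict (hA.injOn (s := I))
  let trace : I → (E → β) := fun i => E.restrict (A i)
  have htrace : Injective trace := hE.injective
  let junk : (E → β) → α := fun _ => Classical.arbitrary α
  exact ⟨_, ⟨⟨E, extend trace (fun i => x i) junk⟩, rfl⟩,
    fun i hi => htrace.extend_apply (fun i : I => x i) junk ⟨i, hi⟩⟩

theorem dense_finitelyDetermined [TopologicalSpace α] [Nonempty α] {A : ι → M → β}
    (hA : Injective A) : Dense (finitelyDetermined (α := α) A) :=
  dense_of_forall_finset_exists_eqOn (exists_mem_finitelyDetermined_eqOn hA)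

theorem mk_finitelyDetermined_le {ι M α : Type u} {β : Type} [Infinite M] [Finite β]
    (A : ι → M → β) (hα : #α ≤ #M) : #(finitelyDetermined (α := α) A) ≤ #M := by
  have hfiber (E : Finset M) : #((E → β) → α) ≤ #M := calc
    #((E → β) → α) = #α ^ #(E → β) := (power_def _ _).symm
    _ ≤ #M ^ #(E → β) := power_le_power_right hα
    _ ≤ #M := pow_le (aleph0_le_mk M) (lt_aleph0_of_finite _)
  calc #(finitelyDetermined (α := α) A) ≤ #(Σ E : Finset M, (E → β) → α) := mk_range_le
    _ = sum fun E : Finset M => #((E → β) → α) := mk_sigma _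
    _ ≤ sum fun _ : Finset M => #M := sum_le_sum _ _ hfiber
    _ = #M := by rw [sum_const', mk_finset_of_infinite, mul_eq_self (aleph0_le_mk M)]

end FinitelyDetermined

/-- **Engelking–Karłowicz density theorem.** Let `μ` be an infinite cardinal. The
product of at most `2 ^ μ` topological spaces, each of which contains a dense subset
of cardinality at most `μ`, contains a dense subset of cardinality at most `μ`. -/
theorem engelking_karlowicz_density (μ : Cardinal.{u}) (hμ : Cardinal.aleph0 ≤ μ)
    {ι : Type u} (X : ι → Type u) [∀ i, TopologicalSpace (X i)]
    (hι : Cardinal.mk ι ≤ 2 ^ μ)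
    (hd : ∀ i, ∃ s : Set (X i), Dense s ∧ Cardinal.mk s ≤ μ) :
    ∃ s : Set (∀ i, X i), Dense s ∧ Cardinal.mk s ≤ μ := by
  rcases isEmpty_or_nonempty (∀ i, X i) with hX | ⟨⟨x⟩⟩
  · exact ⟨∅, isEmptyElim, by simp⟩
  obtain ⟨M, rfl⟩ : ∃ M : Type u, #M = μ := ⟨μ.out, mk_out μ⟩
  have : Infinite M := infinite_iff.2 hμ
  have (i : ι) : Nonempty (X i) := ⟨x i⟩
  choose s hs hsM using hd
  choose f hf using fun i => (hs i).exists_denseRange_of_mk_le (hsM i)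
  obtain ⟨A⟩ : Nonempty (ι ↪ (M → Bool)) := (le_def _ _).1 (by simpa using hι)
  let _ : TopologicalSpace M := ⊥
  have : DiscreteTopology M := ⟨rfl⟩
  have hcont : Continuous (Pi.map f) :=
    continuous_pi fun i => continuous_of_discreteTopology.comp (continuous_apply i)
  exact ⟨Pi.map f '' finitelyDetermined A,
    (DenseRange.piMap hf).dense_image hcont (dense_finitelyDetermined A.injective),
    mk_image_le.trans (mk_finitelyDetermined_le A le_rfl)⟩
end

section
/- For every infinite cardinal λ there exists a λ-regular filter on λ, i.e., a filter D on λ together with a family ⟨X_i : i < λ⟩ of elements of D such that every point t < λ belongs to only finitely many of the sets X_i. -/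
/-!
Identify `λ` with the set of its finite subsets, which has the same cardinality. On finite sets
the sets `{s | i ∈ s}` all belong to the filter `atTop`, which is proper since finite sets are
directed by inclusion, and a finite set `s` lies in `{s | i ∈ s}` only for the finitely many
`i ∈ s`.
-/

universe u

open Filter

theorem Filter.exists_neBot_pointFinite_of_surjective_finset {α ι : Type*}
    {f : α → Finset ι} (hf : Function.Surjective f) :
    ∃ (D : Filter α) (X : ι → Set α),
      D.NeBot ∧ (∀ i, X i ∈ D) ∧ ∀ t : α, {i | t ∈ X i}.Finite := by
  refine ⟨comap f atTop, fun i => f ⁻¹' {s | i ∈ s}, atTop_neBot.comap_of_surj hf,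
    fun i => preimage_mem_comap ?_, fun t => (f t).finite_toSet⟩
  filter_upwards [eventually_ge_atTop {i}] with s hs
  exact Finset.singleton_subset_iff.mp hs

/-- For every infinite cardinal `λ` there exists a `λ`-regular filter on `λ`:
a (proper) filter `D` on `λ` together with a family `⟨X i : i < λ⟩` of members of
`D` such that every point `t` belongs to only finitely many of the sets `X i`. -/
theorem exists_regular_filter (lam : Cardinal.{u}) (hlam : Cardinal.aleph0 ≤ lam) :
    ∃ (D : Filter lam.out) (X : lam.out → Set lam.out),
      D.NeBot ∧ (∀ i, X i ∈ D) ∧ ∀ t : lam.out, {i | t ∈ X i}.Finite := by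
  have : Infinite lam.out := by
    rwa [Cardinal.infinite_iff, Cardinal.mk_out]
  obtain ⟨e⟩ := Cardinal.eq.1 (Cardinal.mk_finset_of_infinite lam.out).symm
  exact Filter.exists_neBot_pointFinite_of_surjective_finset e.surjective
end

section
/- If D is a λ⁺-excellent filter on an index set I, then D is λ⁺-good: every monotonic function f from finite subsets of λ into D has a multiplicative refinement. -/
open scoped Classical

universe u v w

/-- Terms in the language of Boolean algebras, with variables from `V`. -/
inductive BTerm (V : Type v) : Type v where
  | var : V → BTerm V
  | bot : BTerm V
  | top : BTerm V
  | inf : BTerm V → BTerm V → BTerm V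
  | sup : BTerm V → BTerm V → BTerm V
  | compl : BTerm V → BTerm V

/-- Evaluation of a Boolean term in a Boolean algebra, given values for the variables. -/
def BTerm.eval {V : Type v} {B : Type u} [BooleanAlgebra B] (f : V → B) : BTerm V → B
  | .var v => f v
  | .bot => ⊥
  | .top => ⊤
  | .inf s t => s.eval f ⊓ t.eval f
  | .sup s t => s.eval f ⊔ t.eval f
  | .compl t => (t.eval f)ᶜ

/-- `σ ∈ Λ_{D, Ā↾u}`: the Boolean term `σ`, in variables indexed by the subsets of the
finite set `u`, vanishes modulo `D` (i.e. the complement of its value lies in `D`) on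
every sequence obtained from `Ā↾𝒫(u)` by replacing the entries indexed by sets not
contained in some `w ⊆ u` by `∅`.  (Equivalently, `σ` vanishes in the quotient Boolean
algebra `𝒫(I)/D` on every member of `N(Ā↾𝒫(u))`.) -/
def InLambda {ι : Type w} {I : Type u} (D : Filter I) (A : Finset ι → Set I)
    (u : Finset ι) (σ : BTerm {v : Finset ι // v ⊆ u}) : Prop :=
  ∀ w : Finset ι, w ⊆ u →
    (BTerm.eval (fun v => if v.1 ⊆ w then A v.1 else (∅ : Set I)) σ)ᶜ ∈ D

/-- A filter `D` on `I` is `λ⁺`-excellent if every `[λ]^{<ℵ₀}`-indexed sequence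
`Ā` of subsets of `I` admits a refinement `B̄` with `B_u ⊆ A_u`, `B_u = A_u mod D`,
such that every distinguished Boolean term (member of `Λ_{D, Ā↾u}`) evaluates to the
genuinely empty set on `B̄`. -/
def IsExcellent {I : Type u} (lam : Cardinal.{w}) (D : Filter I) : Prop :=
  ∀ A : Finset lam.out → Set I, ∃ B : Finset lam.out → Set I,
    (∀ u, B u ⊆ A u) ∧
    (∀ u, {t | t ∈ A u ↔ t ∈ B u} ∈ D) ∧
    ∀ (u : Finset lam.out) (σ : BTerm {v : Finset lam.out // v ⊆ u}),
      InLambda D A u σ → BTerm.eval (fun v => B v.1) σ = ∅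

/-- A filter `D` on `I` is `λ⁺`-good if every monotonic `f : [λ]^{<ℵ₀} → D` has a
multiplicative refinement `g : [λ]^{<ℵ₀} → D`. -/
def IsGood {I : Type u} (lam : Cardinal.{w}) (D : Filter I) : Prop :=
  ∀ f : Finset lam.out → Set I, (∀ u, f u ∈ D) → (∀ u v, u ⊆ v → f v ⊆ f u) →
    ∃ g : Finset lam.out → Set I, (∀ u, g u ∈ D) ∧ (∀ u, g u ⊆ f u) ∧
      ∀ u v, g u ∩ g v = g (u ∪ v)

/-!
Apply excellence to `f` itself, obtaining `B ⊆ f` with `B = f mod D`. For `w ⊆ u` the term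
`x_u ∧ ¬x_w`, and for any `u, v` the term `x_u ∧ x_v ∧ ¬x_{u ∪ v}`, vanish modulo `D` on every
truncation of `f`: the first by monotonicity of `f`, the second because it is disjoint from
`f (u ∪ v) ∈ D`. Excellence makes both vanish on `B` outright, so `B` is antitone and
multiplicative, and `B ∈ D` because `B = f mod D`.
-/

theorem inLambda_var_inf_compl_var {ι : Type w} {I : Type u} (D : Filter I)
    {A : Finset ι → Set I} {u w : Finset ι} (hw : w ⊆ u) (hA : A u ⊆ A w) :
    InLambda D A u (.inf (.var ⟨u, subset_rfl⟩) (.compl (.var ⟨w, hw⟩))) := by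
  intro w' _
  by_cases hu : u ⊆ w'
  · simp [BTerm.eval, hu, hw.trans hu, ← Set.sdiff_eq, Set.sdiff_eq_empty.2 hA]
  · simp [BTerm.eval, hu]

theorem inLambda_var_inf_var_inf_compl_var {ι : Type w} {I : Type u} {D : Filter I}
    {A : Finset ι → Set I} (u v : Finset ι) (hA : A (u ∪ v) ∈ D) :
    InLambda D A (u ∪ v) (.inf (.inf (.var ⟨u, Finset.subset_union_left⟩)
      (.var ⟨v, Finset.subset_union_right⟩)) (.compl (.var ⟨u ∪ v, subset_rfl⟩))) := by
  intro w' _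
  by_cases hu : u ⊆ w'
  · by_cases hv : v ⊆ w'
    · refine D.mem_of_superset hA fun t ht => ?_
      simp [BTerm.eval, hu, hv, Finset.union_subset hu hv, ht]
    · simp [BTerm.eval, hv]
  · simp [BTerm.eval, hu]

/-- If `D` is a `λ⁺`-excellent filter on an index set `I`, then `D` is `λ⁺`-good. -/
theorem isGood_of_isExcellent {I : Type u} (lam : Cardinal.{w}) (D : Filter I)
    (h : IsExcellent lam D) : IsGood lam D := by
  intro f hfD hf
  obtain ⟨B, hBf, hBeq, hBΛ⟩ := h f
  have hB_anti : ∀ u w, w ⊆ u → B u ⊆ B w := fun u w hw => by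
    simpa [BTerm.eval, ← Set.sdiff_eq, Set.sdiff_eq_empty] using
      hBΛ u _ (inLambda_var_inf_compl_var D hw (hf w u hw))
  have hB_inter : ∀ u v, B u ∩ B v ⊆ B (u ∪ v) := fun u v => by
    simpa [BTerm.eval, ← Set.sdiff_eq, Set.sdiff_eq_empty] using
      hBΛ (u ∪ v) _ (inLambda_var_inf_var_inf_compl_var u v (hfD (u ∪ v)))
  refine ⟨B, fun u => ?_, hBf, fun u v => (hB_inter u v).antisymm ?_⟩
  · exact D.mem_of_superset (D.inter_mem (hBeq u) (hfD u)) fun t ht => ht.1.1 ht.2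
  · exact Set.subset_inter (hB_anti _ _ Finset.subset_union_left)
      (hB_anti _ _ Finset.subset_union_right)
end

section
/- Let D be a λ⁺-excellent filter on I and let ⟨A_u : u ∈ [λ]^{<ω}⟩ be subsets of I. Then there exist ⟨B_u : u ∈ [λ]^{<ω}⟩ with B_u ⊆ A_u, B_u = A_u mod D, and such that whenever u₀, u₁ ∈ [λ]^{<ω} satisfy A_{u₀} ∩ A_{u₁} = A_{u₀∪u₁} mod D, then B_{u₀} ∩ B_{u₁} = B_{u₀∪u₁}. -/
open scoped Classical

universe u v w

/-! Apply excellence to `Ā` itself. With `u = u₀ ∪ u₁`, the Boolean terms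
`(x_{u₀} ⊓ x_{u₁}) \ x_u` and `x_u \ (x_{u₀} ⊓ x_{u₁})` lie in `Λ_{D, Ā↾u}`: under the
substitution below `w ⊆ u`, either `u ⊆ w` and they vanish mod `D` because
`A_{u₀} ∩ A_{u₁} = A_u mod D`, or `u₀ ⊈ w` or `u₁ ⊈ w`, and then both evaluate to `∅` outright.
So both vanish on `B̄`, which is the equality `B_{u₀} ∩ B_{u₁} = B_u`. -/

namespace BTerm

variable {V : Type v}

def sdiff (s t : BTerm V) : BTerm V := s.inf t.compl

@[simp]
theorem eval_sdiff {B : Type*} [BooleanAlgebra B] (f : V → B) (s t : BTerm V) :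
    (s.sdiff t).eval f = s.eval f \ t.eval f :=
  sdiff_eq.symm

end BTerm

section InLambda

variable {ι : Type w} {I : Type u} {D : Filter I} {A : Finset ι → Set I}

theorem inLambda_sdiff_iff {u : Finset ι} {s t : BTerm {v : Finset ι // v ⊆ u}} :
    InLambda D A u (s.sdiff t) ↔ ∀ w ⊆ u, ∀ᶠ a in D,
      a ∈ s.eval (fun v => if v.1 ⊆ w then A v.1 else ∅) →
        a ∈ t.eval (fun v => if v.1 ⊆ w then A v.1 else ∅) := by
  refine forall₂_congr fun w _ => ?_
  rw [BTerm.eval_sdiff, Filter.Eventually]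
  congr! 1
  ext a
  simp

variable (u₀ u₁ : Finset ι)

def interVar : BTerm {v : Finset ι // v ⊆ u₀ ∪ u₁} :=
  (BTerm.var ⟨u₀, Finset.subset_union_left⟩).inf (BTerm.var ⟨u₁, Finset.subset_union_right⟩)

noncomputable def unionVar : BTerm {v : Finset ι // v ⊆ u₀ ∪ u₁} :=
  BTerm.var ⟨u₀ ∪ u₁, subset_rfl⟩

@[simp]
theorem eval_interVar {B : Type*} [BooleanAlgebra B] (f : {v // v ⊆ u₀ ∪ u₁} → B) :
    (interVar u₀ u₁).eval f =
      f ⟨u₀, Finset.subset_union_left⟩ ⊓ f ⟨u₁, Finset.subset_union_right⟩ :=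
  rfl

@[simp]
theorem eval_unionVar {B : Type*} [BooleanAlgebra B] (f : {v // v ⊆ u₀ ∪ u₁} → B) :
    (unionVar u₀ u₁).eval f = f ⟨u₀ ∪ u₁, subset_rfl⟩ :=
  rfl

variable {u₀ u₁}

theorem ite_subset_inf_ite_subset (w : Finset ι) :
    (if u₀ ⊆ w then A u₀ else ∅) ⊓ (if u₁ ⊆ w then A u₁ else ∅) =
      if u₀ ∪ u₁ ⊆ w then A u₀ ⊓ A u₁ else ∅ := by
  simp only [Finset.union_subset_iff]
  split_ifs <;> simp_all

theorem inLambda_interVar_sdiff_unionVar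
    (h : ∀ᶠ a in D, a ∈ A u₀ ∩ A u₁ → a ∈ A (u₀ ∪ u₁)) :
    InLambda D A (u₀ ∪ u₁) ((interVar u₀ u₁).sdiff (unionVar u₀ u₁)) := by
  refine inLambda_sdiff_iff.2 fun w _ => ?_
  simp only [eval_interVar, eval_unionVar]
  rw [ite_subset_inf_ite_subset]
  split_ifs
  · exact h
  · exact Filter.Eventually.of_forall fun _ => id

theorem inLambda_unionVar_sdiff_interVar
    (h : ∀ᶠ a in D, a ∈ A (u₀ ∪ u₁) → a ∈ A u₀ ∩ A u₁) :
    InLambda D A (u₀ ∪ u₁) ((unionVar u₀ u₁).sdiff (interVar u₀ u₁)) := by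
  refine inLambda_sdiff_iff.2 fun w _ => ?_
  simp only [eval_interVar, eval_unionVar]
  rw [ite_subset_inf_ite_subset]
  split_ifs
  · exact h
  · exact Filter.Eventually.of_forall fun _ => id

end InLambda

/-- Let `D` be a `λ⁺`-excellent filter on `I` and `⟨A_u : u ∈ [λ]^{<ℵ₀}⟩` subsets of
`I`.  Then there are `⟨B_u⟩` with `B_u ⊆ A_u`, `B_u = A_u mod D`, such that whenever
`A_{u₀} ∩ A_{u₁} = A_{u₀ ∪ u₁} mod D` then `B_{u₀} ∩ B_{u₁} = B_{u₀ ∪ u₁}`. -/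
theorem excellent_multiplicative_refinement {I : Type u} (lam : Cardinal.{w})
    (D : Filter I) (h : IsExcellent lam D) (A : Finset lam.out → Set I) :
    ∃ B : Finset lam.out → Set I,
      (∀ u, B u ⊆ A u) ∧
      (∀ u, {t | t ∈ A u ↔ t ∈ B u} ∈ D) ∧
      ∀ u₀ u₁ : Finset lam.out,
        {t | t ∈ A u₀ ∩ A u₁ ↔ t ∈ A (u₀ ∪ u₁)} ∈ D →
        B u₀ ∩ B u₁ = B (u₀ ∪ u₁) := by
  obtain ⟨B, hsub, hmod, hterm⟩ := h A
  refine ⟨B, hsub, hmod, fun u₀ u₁ hA => ?_⟩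
  have hle := hterm _ _ <|
    inLambda_interVar_sdiff_unionVar (Filter.Eventually.mono hA fun _ => Iff.mp)
  have hge := hterm _ _ <|
    inLambda_unionVar_sdiff_interVar (Filter.Eventually.mono hA fun _ => Iff.mpr)
  simp only [BTerm.eval_sdiff, eval_interVar, eval_unionVar, Set.sdiff_eq_empty] at hle hge
  exact hle.antisymm hge
end

section
/- Let D be a λ⁺-excellent filter on I and suppose A_α ⊆ I for α < λ. Then there exist B_α ⊆ A_α with B_α = A_α mod D such that for any finite set α₀,…,α_{n−1} < λ, if A_{α₀} ∩ ⋯ ∩ A_{α_{n−1}} = ∅ mod D then B_{α₀} ∩ ⋯ ∩ B_{α_{n−1}} = ∅. -/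
/-!
Apply excellence to the sequence `A' u = ⋂ α ∈ u, A α` and put `B α = B' {α}`. For a finite `s`,
the term `⋀ α ∈ s, x_{{α}}` lies in `Λ_{D, A'↾s}`: each of its truncations evaluates to a subset of
`⋂ α ∈ s, A α`, which is null modulo `D`. Hence its value on `B'`, namely `⋂ α ∈ s, B α`, is empty.
-/

open scoped Classical

universe u v w

namespace BTerm

variable {V : Type v}

def listInf (l : List V) : BTerm V :=
  l.foldr (fun v t => .inf (.var v) t) .top

theorem eval_listInf {B : Type u} [CompleteBooleanAlgebra B] (f : V → B) (l : List V) :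
    (listInf l).eval f = ⨅ v ∈ l, f v := by
  induction l with
  | nil => simp [listInf, eval]
  | cons v l ih =>
    simp only [listInf, List.foldr_cons, eval] at ih ⊢
    rw [ih]
    simp only [List.mem_cons, iInf_or, iInf_inf_eq, iInf_iInf_eq_left]

noncomputable def singletonInf {ι : Type w} (s : Finset ι) : BTerm {v : Finset ι // v ⊆ s} :=
  listInf (s.attach.toList.map fun a => ⟨{a.1}, Finset.singleton_subset_iff.mpr a.2⟩)

theorem eval_singletonInf {ι : Type w} {I : Type u} (g : Finset ι → Set I) (s : Finset ι) :
    (singletonInf s).eval (fun v => g v.1) = ⋂ α ∈ s, g {α} := by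
  ext x
  simp only [singletonInf, eval_listInf, List.mem_map, Finset.mem_toList, Finset.mem_attach,
    true_and, Set.iInf_eq_iInter, Set.mem_iInter, Subtype.forall, Subtype.mk.injEq]
  exact ⟨fun h α hα => h _ (Finset.singleton_subset_iff.mpr hα) ⟨⟨α, hα⟩, rfl⟩,
    by rintro h _ - ⟨⟨α, hα⟩, rfl⟩; exact h α hα⟩

end BTerm

theorem inLambda_singletonInf {ι : Type w} {I : Type u} {D : Filter I}
    {A : Finset ι → Set I} {s : Finset ι} (hs : (⋂ α ∈ s, A {α})ᶜ ∈ D) :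
    InLambda D A s (BTerm.singletonInf s) := by
  intro w _
  rw [BTerm.eval_singletonInf (fun v => if v ⊆ w then A v else ∅)]
  refine Filter.mem_of_superset hs (Set.compl_subset_compl.mpr <| Set.iInter₂_mono fun α _ => ?_)
  split_ifs
  exacts [le_rfl, Set.empty_subset _]

/-- Let `D` be a `λ⁺`-excellent filter on `I` and `A_α ⊆ I` for `α < λ`.  Then there
are `B_α ⊆ A_α` with `B_α = A_α mod D` such that for every finite set of indices
`s ⊆ λ`, if `⋂_{α ∈ s} A_α = ∅ mod D` then `⋂_{α ∈ s} B_α = ∅`. -/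
theorem excellent_finite_intersections {I : Type u} (lam : Cardinal.{w})
    (D : Filter I) (h : IsExcellent lam D) (A : lam.out → Set I) :
    ∃ B : lam.out → Set I,
      (∀ α, B α ⊆ A α) ∧
      (∀ α, {t | t ∈ A α ↔ t ∈ B α} ∈ D) ∧
      ∀ s : Finset lam.out, (⋂ α ∈ s, A α)ᶜ ∈ D → (⋂ α ∈ s, B α) = ∅ := by
  obtain ⟨B', hsub, hmodD, hnull⟩ := h fun u => ⋂ α ∈ u, A α
  have hsingleton (α : lam.out) : ⋂ β ∈ ({α} : Finset lam.out), A β = A α := by simp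
  refine ⟨fun α => B' {α}, fun α => ?_, fun α => ?_, fun s hs => ?_⟩
  · simpa only [hsingleton] using hsub {α}
  · simpa only [hsingleton] using hmodD {α}
  · have := hnull s _ (inLambda_singletonInf (by simpa only [hsingleton] using hs))
    rwa [BTerm.eval_singletonInf] at this
end

section
/- Let I be an index set, D a filter on I, and G a family of functions from I to a cardinal κ such that (I, D, G) is a good triple (D is maximal such that G is independent mod D). Then the family Fin_s(G) = {A_h : h ∈ Fin(G)} is dense in P(I) modulo D: for every X ⊆ I with X ≠ ∅ mod D there is A_h ∈ Fin_s(G) with A_h ⊆ X mod D. -/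
universe u v

/-- `(I, D, G)` is a pre-good triple: every set `A_h = {t : g t = h g for g ∈ s}`,
for a finite `s ⊆ G` and a choice function `h` with `h g ∈ range g`, is nonempty
modulo `D` (i.e. meets every member of `D`). -/
def PreGoodTriple {I : Type u} {K : Type v} (D : Filter I) (G : Set (I → K)) : Prop :=
  ∀ s : Finset (I → K), ↑s ⊆ G → ∀ h : (I → K) → K, (∀ g ∈ s, h g ∈ Set.range g) →
    ∀ Y ∈ D, ({t : I | ∀ g ∈ s, g t = h g} ∩ Y).Nonempty

/-- `(I, D, G)` is a good triple: pre-good, and `D` is maximal among filters with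
this property (recall that in `Filter`'s order, `D' ≤ D` means `D'` extends `D`). -/
def GoodTriple {I : Type u} {K : Type v} (D : Filter I) (G : Set (I → K)) : Prop :=
  PreGoodTriple D G ∧
    ∀ D' : Filter I, D' ≤ D → PreGoodTriple D' G → D' = D

/-
If no `A_h` were contained in `X` modulo `D`, every `A_h` would meet `Xᶜ` modulo `D`, so the
extension `D ⊓ 𝓟 Xᶜ` of `D` would still be pre-good. Maximality of `D` forces `Xᶜ ∈ D`, which
contradicts `X ≠ ∅ mod D`.
-/

open Filter

section GoodTriple

variable {I : Type u} {K : Type v} {D : Filter I} {G : Set (I → K)}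

theorem preGoodTriple_iff_frequently :
    PreGoodTriple D G ↔ ∀ s : Finset (I → K), ↑s ⊆ G → ∀ h : (I → K) → K,
      (∀ g ∈ s, h g ∈ Set.range g) → ∃ᶠ t in D, ∀ g ∈ s, g t = h g := by
  simp only [PreGoodTriple, frequently_iff, Set.inter_comm _ (_ : Set I), Set.Nonempty,
    Set.mem_inter_iff, Set.mem_ofPred_eq]

theorem preGoodTriple_inf_principal_iff {Z : Set I} :
    PreGoodTriple (D ⊓ 𝓟 Z) G ↔ ∀ s : Finset (I → K), ↑s ⊆ G → ∀ h : (I → K) → K,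
      (∀ g ∈ s, h g ∈ Set.range g) → ∃ᶠ t in D, (∀ g ∈ s, g t = h g) ∧ t ∈ Z := by
  simp only [preGoodTriple_iff_frequently, frequently_inf_principal, and_comm]

theorem GoodTriple.mem_of_preGoodTriple_inf_principal (hgood : GoodTriple D G) {Z : Set I}
    (hZ : PreGoodTriple (D ⊓ 𝓟 Z) G) : Z ∈ D := by
  rw [← hgood.2 _ inf_le_left hZ]
  exact mem_inf_of_right (mem_principal_self Z)

end GoodTriple

/-- If `(I, D, G)` is a good triple then `Fin_s(G)` is dense in `𝒫(I)` modulo `D`: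
for every `X ⊆ I` which is nonempty mod `D` there are a finite `s ⊆ G` and a choice
function `h` such that `A_h ⊆ X mod D`, i.e. `A_h ∖ X = ∅ mod D`. -/
theorem goodTriple_dense {I : Type u} {K : Type v} (D : Filter I) (G : Set (I → K))
    (hgood : GoodTriple D G) (X : Set I) (hX : ∀ Y ∈ D, (X ∩ Y).Nonempty) :
    ∃ (s : Finset (I → K)) (h : (I → K) → K), ↑s ⊆ G ∧ (∀ g ∈ s, h g ∈ Set.range g) ∧
      ({t : I | ∀ g ∈ s, g t = h g} \ X)ᶜ ∈ D := by
  by_contra! hsparse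
  have hpre : PreGoodTriple (D ⊓ 𝓟 Xᶜ) G := preGoodTriple_inf_principal_iff.2
    fun s hs h hh => (not_eventually.1 (hsparse s h hs hh)).mono fun _ => not_not.1
  have hXc : Xᶜ ∈ D := hgood.mem_of_preGoodTriple_inf_principal hpre
  obtain ⟨t, htX, htXc⟩ := hX _ hXc
  exact htXc htX
end

section
/- Let B_{χ,μ} be the completion of the Boolean algebra freely generated by {x_{α,ε} : α < χ, ε < μ} subject only to the relations x_{α,ε} ∧ x_{α,ζ} = 0 for ε < ζ < μ. Then B_{χ,μ} satisfies the μ⁺-chain condition. -/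
/-!
Shrink each member `a` of a family `T` of pairwise disjoint nonzero elements to a nonzero
finite conjunction of literals `cell x (s a) (t a) ≤ a`; being nonzero, it is consistent with the
row relations. If `μ < #T`, the Δ-system lemma applied to the finite sets of rows these cells
mention yields `> μ` of them with a common finite root `r`. A cell can only look like one of `μ`
possibilities on the rows in `r`, so two of them, for `a ≠ b`, agree on their common rows.
Their union is consistent, hence nonzero by freeness, yet lies below `a ⊓ b = ⊥`.
-/

open Cardinal Set

theorem mk_finset_le_of_mk_le {γ : Type u} {μ : Cardinal.{u}} (hμ : ℵ₀ ≤ μ) (h : #γ ≤ μ) :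
    #(Finset γ) ≤ μ := by
  classical
  exact (mk_le_of_surjective List.toFinset_surjective).trans <|
    (mk_list_le_max γ).trans (max_le hμ h)

theorem mk_fst_mem_finset_le {α β : Type u} {μ : Cardinal.{u}} (hμ : ℵ₀ ≤ μ) (r : Finset α)
    (hβ : #β ≤ μ) : #{p : α × β // p.1 ∈ r} ≤ μ := by
  rw [mk_congr Equiv.prodSubtypeFstEquivSubtypeProd, mk_prod, lift_id, lift_id]
  calc #{a // a ∈ r} * #β ≤ μ * μ := mul_le_mul' ((lt_aleph0_of_finite _).le.trans hμ) hβ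
    _ = μ := mul_eq_self hμ

section DeltaSystem

variable {ι α : Type u} {μ : Cardinal.{u}}

theorem mk_biUnion_le_of_mk_le {s : Set ι} {A : ι → Set α} (hμ : ℵ₀ ≤ μ) (hs : #s ≤ μ)
    (hA : ∀ i ∈ s, #(A i) ≤ μ) : #(⋃ i ∈ s, A i) ≤ μ := by
  have hsup : ⨆ i : s, #(A i) ≤ μ := ciSup_le' fun i => hA i.1 i.2
  calc #(⋃ i ∈ s, A i) ≤ #s * ⨆ i : s, #(A i) := mk_biUnion_le A s
    _ ≤ μ * μ := mul_le_mul' hs hsup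
    _ = μ := mul_eq_self hμ

theorem exists_pairwiseDisjoint_of_forall_mk_le (hμ : ℵ₀ ≤ μ) (A : ι → Finset α) {S₀ : Set ι}
    (hS₀ : μ < #S₀) (hA : ∀ a, #{i ∈ S₀ | a ∈ A i} ≤ μ) :
    ∃ S ⊆ S₀, μ < #S ∧ S.PairwiseDisjoint A := by
  obtain ⟨S, ⟨hSS₀, hS⟩, hmax⟩ :=
    zorn_subset {S | S ⊆ S₀ ∧ S.PairwiseDisjoint A} fun c hc hchain => by
      refine ⟨⋃₀ c, ⟨sUnion_subset fun S hS => (hc hS).1, ?_⟩, fun S => subset_sUnion_of_mem⟩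
      exact (pairwise_sUnion hchain.directedOn).2 fun S hS => (hc hS).2
  refine ⟨S, hSS₀, lt_of_not_ge fun hSμ => ?_, hS⟩
  -- If `S` were small, it would meet only `μ` members of `S₀`, and any other could be added.
  set U := ⋃ i ∈ S, (A i : Set α)
  have hU : #U ≤ μ :=
    mk_biUnion_le_of_mk_le hμ hSμ fun i _ => (A i).finite_toSet.lt_aleph0.le.trans hμ
  have hblocked : #(S ∪ ⋃ a ∈ U, {i ∈ S₀ | a ∈ A i} : Set ι) ≤ μ :=
    (mk_union_le _ _).trans (add_le_of_le hμ hSμ (mk_biUnion_le_of_mk_le hμ hU fun a _ => hA a))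
  obtain ⟨j, hjS₀, hj⟩ := sdiff_nonempty_of_mk_lt_mk (hblocked.trans_lt hS₀)
  have hjS : j ∉ S := fun h => hj (Or.inl h)
  have hdisj : ∀ i ∈ S, Disjoint (A j) (A i) := fun i hi =>
    Finset.disjoint_left.2 fun a haj hai =>
      hj (Or.inr (mem_biUnion (mem_biUnion hi hai) ⟨hjS₀, haj⟩))
  exact hjS (hmax ⟨insert_subset hjS₀ hSS₀, hS.insert fun i hi _ => hdisj i hi⟩
    (subset_insert j S) (mem_insert j S))

theorem exists_delta_system_of_card_le [DecidableEq α] (hμ : ℵ₀ ≤ μ) (n : ℕ) :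
    ∀ (A : ι → Finset α) (S₀ : Set ι), μ < #S₀ → (∀ i ∈ S₀, (A i).card ≤ n) →
      ∃ r : Finset α, ∃ S ⊆ S₀, μ < #S ∧ S.Pairwise fun i j => A i ∩ A j = r := by
  induction n with
  | zero =>
    intro A S₀ hS₀ hA
    refine ⟨∅, S₀, subset_rfl, hS₀, fun i hi j _ _ => ?_⟩
    show A i ∩ A j = ∅
    rw [Finset.card_eq_zero.1 (Nat.le_zero.1 (hA i hi)), Finset.empty_inter]
  | succ n ih =>
    intro A S₀ hS₀ hA
    by_cases hpoint : ∃ a, μ < #{i ∈ S₀ | a ∈ A i}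
    · obtain ⟨a, ha⟩ := hpoint
      obtain ⟨r, S, hS, hSμ, hr⟩ := ih (fun i => (A i).erase a) _ ha fun i hi => by
        have := hA i hi.1
        rw [Finset.card_erase_of_mem hi.2]
        omega
      refine ⟨insert a r, S, hS.trans (sep_subset _ _), hSμ, fun i hi j hj hij => ?_⟩
      rw [← hr hi hj hij, Finset.erase_inter, Finset.inter_erase, Finset.erase_idem,
        Finset.insert_erase (Finset.mem_inter.2 ⟨(hS hi).2, (hS hj).2⟩)]
    · push Not at hpoint
      obtain ⟨S, hS, hSμ, hdisj⟩ := exists_pairwiseDisjoint_of_forall_mk_le hμ A hS₀ hpoint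
      exact ⟨∅, S, hS, hSμ, fun i hi j hj hij =>
        Finset.disjoint_iff_inter_eq_empty.1 (hdisj hi hj hij)⟩

theorem exists_delta_system [DecidableEq α] (hμ : ℵ₀ ≤ μ) (A : ι → Finset α) (hι : μ < #ι) :
    ∃ r : Finset α, ∃ S : Set ι, μ < #S ∧ S.Pairwise fun i j => A i ∩ A j = r := by
  obtain ⟨n, hn⟩ : ∃ n : ℕ, μ < #{i | (A i).card ≤ n} := by
    by_contra! h
    exact hι.not_ge (mk_le_of_countable_eventually_mem (l := Filter.atTop)
      (fun i => Filter.eventually_ge_atTop (A i).card) h)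
  obtain ⟨r, S, -, hS, hr⟩ := exists_delta_system_of_card_le hμ n A _ hn fun i hi => hi
  exact ⟨r, S, hS, hr⟩

end DeltaSystem

namespace Literals

section Cell

variable {α β B : Type*} [BooleanAlgebra B] (x : α → β → B)

def cell (s t : Finset (α × β)) : B :=
  (s.inf fun p => x p.1 p.2) ⊓ (t.inf fun q => (x q.1 q.2)ᶜ)

def IsConsistent (s t : Finset (α × β)) : Prop :=
  Set.InjOn Prod.fst (s : Set (α × β)) ∧ Disjoint s t

theorem cell_union [DecidableEq α] [DecidableEq β] (s t s' t' : Finset (α × β)) :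
    cell x (s ∪ s') (t ∪ t') = cell x s t ⊓ cell x s' t' := by
  simp only [cell, Finset.inf_union]
  exact inf_inf_inf_comm _ _ _ _

variable {x} in
theorem isConsistent_of_cell_ne_bot (hdisj : ∀ a b b', b ≠ b' → x a b ⊓ x a b' = ⊥)
    {s t : Finset (α × β)} (h : cell x s t ≠ ⊥) : IsConsistent s t := by
  have hpos : ∀ p ∈ s, cell x s t ≤ x p.1 p.2 := fun p hp =>
    inf_le_left.trans (Finset.inf_le hp)
  refine ⟨fun p hp q hq hpq => ?_, Finset.disjoint_left.2 fun p hps hpt => h ?_⟩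
  · by_contra hne
    have h2 : p.2 ≠ q.2 := fun h2 => hne (Prod.ext hpq h2)
    refine h (le_bot_iff.1 ?_)
    calc cell x s t ≤ x p.1 p.2 ⊓ x q.1 q.2 := le_inf (hpos p hp) (hpos q hq)
      _ = ⊥ := by rw [hpq]; exact hdisj q.1 p.2 q.2 h2
  · refine le_bot_iff.1 ?_
    have hneg : cell x s t ≤ (x p.1 p.2)ᶜ :=
      inf_le_right.trans (Finset.inf_le (f := fun q => (x q.1 q.2)ᶜ) hpt)
    calc cell x s t ≤ x p.1 p.2 ⊓ (x p.1 p.2)ᶜ := le_inf (hpos p hps) hneg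
      _ = ⊥ := inf_compl_eq_bot

end Cell

theorem IsConsistent.union {α β : Type*} [DecidableEq α] [DecidableEq β]
    {s t s' t' : Finset (α × β)} (h : IsConsistent s t) (h' : IsConsistent s' t')
    (hagree : ∀ p : α × β, p.1 ∈ (s ∪ t).image Prod.fst → p.1 ∈ (s' ∪ t').image Prod.fst →
      (p ∈ s ↔ p ∈ s')) :
    IsConsistent (s ∪ s') (t ∪ t') := by
  have dom {s t : Finset (α × β)} {p : α × β} (hp : p ∈ s ∨ p ∈ t) :
      p.1 ∈ (s ∪ t).image Prod.fst := Finset.mem_image_of_mem _ (Finset.mem_union.2 hp)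
  refine ⟨?_, Finset.disjoint_left.2 ?_⟩
  · have cross {p q} (hp : p ∈ s) (hq : q ∈ s') (hpq : p.1 = q.1) : p = q :=
      h'.1 ((hagree p (dom (.inl hp)) (hpq ▸ dom (.inl hq))).1 hp) hq hpq
    rw [Finset.coe_union]
    rintro p (hp | hp) q (hq | hq) hpq
    exacts [h.1 hp hq hpq, cross hp hq hpq, (cross hq hp hpq.symm).symm, h'.1 hp hq hpq]
  · intro p hp hp'
    rw [Finset.mem_union] at hp hp'
    rcases hp with hp | hp <;> rcases hp' with hp' | hp'
    · exact Finset.disjoint_left.1 h.2 hp hp'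
    · exact Finset.disjoint_left.1 h'.2 ((hagree p (dom (.inl hp)) (dom (.inr hp'))).1 hp) hp'
    · exact Finset.disjoint_left.1 h.2 ((hagree p (dom (.inr hp')) (dom (.inl hp))).2 hp) hp'
    · exact Finset.disjoint_left.1 h'.2 hp hp'

theorem exists_ne_isConsistent_union {ι α β : Type u} {μ : Cardinal.{u}} [DecidableEq α]
    [DecidableEq β] (hμ : ℵ₀ ≤ μ) (hβ : #β ≤ μ) (s t : ι → Finset (α × β))
    (hst : ∀ i, IsConsistent (s i) (t i)) (hι : μ < #ι) :
    ∃ i j, i ≠ j ∧ IsConsistent (s i ∪ s j) (t i ∪ t j) := by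
  obtain ⟨r, S, hS, hr⟩ := exists_delta_system hμ (fun i => (s i ∪ t i).image Prod.fst) hι
  let trace (i : S) : Finset {p : α × β // p.1 ∈ r} := (s i).subtype (·.1 ∈ r)
  obtain ⟨⟨i, hi⟩, ⟨j, hj⟩, htrace, hij⟩ : ∃ i j, trace i = trace j ∧ i ≠ j :=
    Function.not_injective_iff.1 fun hinj => hS.not_ge <| (mk_le_of_injective hinj).trans <|
      mk_finset_le_of_mk_le hμ (mk_fst_mem_finset_le hμ r hβ)
  have hij : i ≠ j := fun h => hij (Subtype.ext h)
  refine ⟨i, j, hij, (hst i).union (hst j) fun p hpi hpj => ?_⟩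
  have hpr : p.1 ∈ r := hr hi hj hij ▸ Finset.mem_inter.2 ⟨hpi, hpj⟩
  simpa [trace, hpr] using congrArg (⟨p, hpr⟩ ∈ ·) htrace

end Literals

/-- **`B_{χ,μ}` has the `μ⁺`-chain condition.**  Here `B_{χ,μ}`, the completion of the
Boolean algebra generated freely by `{x_{α,ε} : α < χ, ε < μ}` except for the relations
`x_{α,ε} ⊓ x_{α,ζ} = 0` (`ε ≠ ζ`), is characterized as a complete Boolean algebra `B`
with elements `x α ε` such that: the rows are pairwise disjoint (`hdisj`); every finite
conjunction of literals consistent with these relations is nonzero (freeness, `hfree`);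
and the finite conjunctions of literals are dense in `B` (being a completion, `hdense`).
Then every family of pairwise disjoint nonzero elements of `B` has cardinality at
most `μ`. -/
theorem free_completion_chain_condition {B : Type u} [CompleteBooleanAlgebra B]
    (χ μ : Cardinal.{u}) (hμ : Cardinal.aleph0 ≤ μ)
    (x : χ.out → μ.out → B)
    (hdisj : ∀ (α : χ.out) (ε ζ : μ.out), ε ≠ ζ → x α ε ⊓ x α ζ = ⊥)
    (hfree : ∀ s t : Finset (χ.out × μ.out),
      (∀ p ∈ s, ∀ q ∈ s, (p : χ.out × μ.out).1 = (q : χ.out × μ.out).1 → p = q) →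
      (∀ p ∈ s, p ∉ t) →
      (s.inf fun p => x p.1 p.2) ⊓ (t.inf fun q => (x q.1 q.2)ᶜ) ≠ ⊥)
    (hdense : ∀ b : B, b ≠ ⊥ → ∃ s t : Finset (χ.out × μ.out),
      (s.inf fun p => x p.1 p.2) ⊓ (t.inf fun q => (x q.1 q.2)ᶜ) ≠ ⊥ ∧
      (s.inf fun p => x p.1 p.2) ⊓ (t.inf fun q => (x q.1 q.2)ᶜ) ≤ b)
    (T : Set B) (hT0 : ∀ a ∈ T, a ≠ ⊥)
    (hTd : T.Pairwise fun a b => a ⊓ b = ⊥) :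
    Cardinal.mk T ≤ μ := by
  classical
  by_contra! hT
  choose s t hne hle using fun a : T => hdense a (hT0 a a.2)
  obtain ⟨a, b, hab, hcons⟩ := Literals.exists_ne_isConsistent_union hμ (mk_out μ).le s t
    (fun a => Literals.isConsistent_of_cell_ne_bot hdisj (hne a)) hT
  refine hfree _ _ (fun p hp q hq => hcons.1 hp hq) (Finset.disjoint_left.1 hcons.2)
    (le_bot_iff.1 ?_)
  calc Literals.cell x (s a ∪ s b) (t a ∪ t b)
      _ = Literals.cell x (s a) (t a) ⊓ Literals.cell x (s b) (t b) := Literals.cell_union ..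
      _ ≤ (a : B) ⊓ b := inf_le_inf (hle a) (hle b)
      _ = ⊥ := hTd a.2 b.2 (Subtype.coe_ne_coe.2 hab)
end

section
/- Let B be a complete Boolean algebra with the μ⁺-chain condition, D a filter on B, and G a set of independent partitions making (B, D, G) a good Boolean triple. For every element b of B that is nonzero mod D, there exists a partition of B into at most μ elements of Fin_s(G), each of which lies below b or below its complement modulo D, supporting b. -/
/-!
Choose, by Zorn's lemma, a maximal family `S` of pairwise disjoint finite intersections `A_h`
each of which decides `b` modulo `D`; the chain condition bounds `|S|` by `μ`. For `u = ⋁ S`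
and `x ∈ {b, bᶜ}`, adjoining `u ⊔ x` to `D` keeps every `A_h` positive: an `A_h` killed by
`(u ⊔ x) ⊓ d` decides `b` and is null against `u`, so by maximality of `S` it meets some
member of `S`, and their meet, again an `A_h`, is null modulo `D`. Maximality of `D` then puts
`u ⊔ b` and `u ⊔ bᶜ`, hence `u`, into `D`.
-/

universe u v

structure BFilter (B : Type u) [BooleanAlgebra B] where
  sets : Set B
  top_mem : ⊤ ∈ sets
  inf_mem : ∀ ⦃a b : B⦄, a ∈ sets → b ∈ sets → a ⊓ b ∈ sets
  mem_of_le : ∀ ⦃a b : B⦄, a ∈ sets → a ≤ b → b ∈ sets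

theorem exists_maximal_pairwise_subset {α : Type*} (r : α → α → Prop) (X : Set α) :
    ∃ S, Maximal (fun S => S ⊆ X ∧ S.Pairwise r) S := by
  refine zorn_subset _ fun c hc hchain => ⟨⋃₀ c, ⟨?_, ?_⟩, fun _ => Set.subset_sUnion_of_mem⟩
  · exact Set.sUnion_subset fun S hS => (hc hS).1
  · exact (Set.pairwise_sUnion hchain.directedOn).2 fun S hS => (hc hS).2

section FinInter

variable {B : Type*} [Lattice B] [BoundedOrder B] {κ ι : Type*}

/-- `Fin_s(G)`: the elements `A_h = ⨅ i ∈ s, P i (e i)`. -/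
def finInter (P : κ → ι → B) : Set B :=
  {c | ∃ (s : Finset κ) (e : κ → ι), c = s.inf fun i => P i (e i)}

theorem inf_mem_finInter_or_eq_bot [DecidableEq κ] {P : κ → ι → B}
    (hP : ∀ (i : κ) (ε ζ : ι), ε ≠ ζ → P i ε ⊓ P i ζ = ⊥) {c c' : B}
    (hc : c ∈ finInter P) (hc' : c' ∈ finInter P) : c ⊓ c' = ⊥ ∨ c ⊓ c' ∈ finInter P := by
  obtain ⟨s, e, rfl⟩ := hc
  obtain ⟨t, e', rfl⟩ := hc'
  by_cases hclash : ∃ i ∈ s, i ∈ t ∧ e i ≠ e' i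
  · obtain ⟨i, his, hit, hne⟩ := hclash
    left
    rw [← le_bot_iff, ← hP i _ _ hne]
    exact inf_le_inf (Finset.inf_le his) (Finset.inf_le hit)
  · push Not at hclash
    right
    refine ⟨s ∪ t, fun i => if i ∈ s then e i else e' i, ?_⟩
    rw [Finset.inf_union]
    congr 1
    · exact Finset.inf_congr rfl fun i hi => by simp [hi]
    · refine Finset.inf_congr rfl fun i hi => ?_
      by_cases his : i ∈ s
      · simp [his, hclash i his hi]
      · simp [his]

end FinInter

namespace BFilter

variable {B : Type*} [BooleanAlgebra B] (D : BFilter B)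

def Positive (c : B) : Prop := ∀ d ∈ D.sets, c ⊓ d ≠ ⊥

def IsMaximalPositive (F : Set B) : Prop :=
  ∀ D' : BFilter B, D.sets ⊆ D'.sets → (∀ c ∈ F, D'.Positive c) → D'.sets = D.sets

/-- `c` lies below `b` or below `bᶜ` modulo `D`. -/
def Decides (b c : B) : Prop := (c ⊓ bᶜ)ᶜ ∈ D.sets ∨ (c ⊓ b)ᶜ ∈ D.sets

def adjoin (x : B) : BFilter B where
  sets := {y | ∃ d ∈ D.sets, x ⊓ d ≤ y}
  top_mem := ⟨⊤, D.top_mem, le_top⟩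
  inf_mem := by
    rintro a c ⟨d, hd, ha⟩ ⟨d', hd', hc⟩
    refine ⟨d ⊓ d', D.inf_mem hd hd', le_inf ?_ ?_⟩
    · exact (inf_le_inf_left x inf_le_left).trans ha
    · exact (inf_le_inf_left x inf_le_right).trans hc
  mem_of_le := by
    rintro a c ⟨d, hd, ha⟩ hac
    exact ⟨d, hd, ha.trans hac⟩

variable {D}

theorem compl_mem_of_inf_eq_bot {a d : B} (hd : d ∈ D.sets) (had : a ⊓ d = ⊥) : aᶜ ∈ D.sets :=
  D.mem_of_le hd (le_compl_iff_disjoint_left.2 (disjoint_iff.2 had))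

theorem decides_compl_iff {b c : B} : D.Decides bᶜ c ↔ D.Decides b c := by
  rw [Decides, Decides, compl_compl, or_comm]

theorem IsMaximalPositive.mem {F : Set B} (hD : D.IsMaximalPositive F) {x : B}
    (hx : ∀ c ∈ F, D.Positive (c ⊓ x)) : x ∈ D.sets := by
  have hadjoin : (D.adjoin x).sets = D.sets := by
    refine hD _ (fun d hd => ⟨d, hd, inf_le_right⟩) fun c hc y ⟨d, hd, hy⟩ hbot => ?_
    refine hx c hc d hd (le_bot_iff.1 ?_)
    rw [← hbot, inf_assoc]
    exact inf_le_inf_left c hy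
  exact hadjoin ▸ ⟨⊤, D.top_mem, inf_le_left⟩

variable {F : Set B} {b : B} {S : Set B}

theorem positive_inf_of_maximal (hF : ∀ c ∈ F, D.Positive c)
    (hFinf : ∀ c ∈ F, ∀ c' ∈ F, c ⊓ c' = ⊥ ∨ c ⊓ c' ∈ F)
    (hS : Maximal (fun S => S ⊆ {c ∈ F | D.Decides b c} ∧ S.Pairwise Disjoint) S)
    {c : B} (hc : c ∈ F) (hcb : D.Decides b c) {u : B} (hu : u ∈ upperBounds S) :
    D.Positive (c ⊓ u) := by
  intro d hd hbot
  have hnull : ∀ a ∈ F, a ≤ c ⊓ u → False := fun a ha hle =>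
    hF a ha d hd (le_bot_iff.1 (hbot ▸ inf_le_inf_right d hle))
  have hmeet : ∃ c' ∈ S, ¬Disjoint c c' := by
    by_contra! hdisj
    have hcS : c ∈ S := hS.mem_of_prop_insert
      ⟨Set.insert_subset ⟨hc, hcb⟩ hS.prop.1,
        hS.prop.2.insert_of_symm fun c' hc' _ => hdisj c' hc'⟩
    exact hnull c hc (le_inf le_rfl (hu hcS))
  obtain ⟨c', hc'S, hcc'⟩ := hmeet
  rcases hFinf c hc c' (hS.prop.1 hc'S).1 with h | h
  · exact hcc' (disjoint_iff.2 h)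
  · exact hnull _ h (inf_le_inf_left c (hu hc'S))

theorem sup_mem_of_positive_inf (hD : D.IsMaximalPositive F) {u x : B}
    (h : ∀ c ∈ F, (c ⊓ x)ᶜ ∈ D.sets → D.Positive (c ⊓ u)) : u ⊔ x ∈ D.sets := by
  refine hD.mem fun c hc d hd hbot => ?_
  have hle : ∀ y ≤ u ⊔ x, c ⊓ y ⊓ d = ⊥ := fun y hy =>
    le_bot_iff.1 (hbot ▸ inf_le_inf_right d (inf_le_inf_left c hy))
  exact h c hc (compl_mem_of_inf_eq_bot hd (hle x le_sup_right)) d hd (hle u le_sup_left)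

theorem mem_of_maximal (hD : D.IsMaximalPositive F) (hF : ∀ c ∈ F, D.Positive c)
    (hFinf : ∀ c ∈ F, ∀ c' ∈ F, c ⊓ c' = ⊥ ∨ c ⊓ c' ∈ F)
    (hS : Maximal (fun S => S ⊆ {c ∈ F | D.Decides b c} ∧ S.Pairwise Disjoint) S)
    {u : B} (hu : u ∈ upperBounds S) : u ∈ D.sets := by
  have hb : u ⊔ b ∈ D.sets := sup_mem_of_positive_inf hD fun c hc hcb =>
    positive_inf_of_maximal hF hFinf hS hc (Or.inr hcb) hu
  have hbc : u ⊔ bᶜ ∈ D.sets := sup_mem_of_positive_inf hD fun c hc hcb =>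
    positive_inf_of_maximal hF hFinf hS hc (decides_compl_iff.1 (Or.inr hcb)) hu
  simpa only [← sup_inf_left, inf_compl_eq_bot, sup_bot_eq] using D.inf_mem hb hbc

end BFilter

theorem exists_supporting_partition_general {B : Type u} [CompleteBooleanAlgebra B]
    (μ : Cardinal.{u}) {κ : Type v}
    (hcc : ∀ T : Set B, (∀ a ∈ T, a ≠ ⊥) →
      (T.Pairwise fun a b => a ⊓ b = ⊥) → Cardinal.mk T ≤ μ)
    (P : κ → μ.out → B)
    (hpdisj : ∀ (i : κ) (ε ζ : μ.out), ε ≠ ζ → P i ε ⊓ P i ζ = ⊥)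
    (D : BFilter B)
    (htriple : ∀ (s : Finset κ) (e : κ → μ.out), ∀ d ∈ D.sets,
      (s.inf fun i => P i (e i)) ⊓ d ≠ ⊥)
    (hmax : ∀ D' : BFilter B, D.sets ⊆ D'.sets →
      (∀ (s : Finset κ) (e : κ → μ.out), ∀ d ∈ D'.sets,
        (s.inf fun i => P i (e i)) ⊓ d ≠ ⊥) →
      D'.sets = D.sets)
    (b : B) :
    ∃ S : Set B,
      Cardinal.mk S ≤ μ ∧
      (∀ c ∈ S, ∃ (s : Finset κ) (e : κ → μ.out), c = s.inf fun i => P i (e i)) ∧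
      (∀ c ∈ S, ∀ d ∈ D.sets, c ⊓ d ≠ ⊥) ∧
      (S.Pairwise fun c c' => (c ⊓ c')ᶜ ∈ D.sets) ∧
      sSup S ∈ D.sets ∧
      ∀ c ∈ S, (c ⊓ bᶜ)ᶜ ∈ D.sets ∨ (c ⊓ b)ᶜ ∈ D.sets := by
  classical
  have hF : ∀ c ∈ finInter P, D.Positive c := by
    rintro _ ⟨s, e, rfl⟩
    exact htriple s e
  have hD : D.IsMaximalPositive (finInter P) := fun D' hDD' hD' =>
    hmax D' hDD' fun s e => hD' _ ⟨s, e, rfl⟩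
  obtain ⟨S, hS⟩ := exists_maximal_pairwise_subset Disjoint {c ∈ finInter P | D.Decides b c}
  have hSF : ∀ c ∈ S, c ∈ finInter P := fun c hc => (hS.prop.1 hc).1
  refine ⟨S, ?_, hSF, fun c hc => hF c (hSF c hc), ?_, ?_, fun c hc => (hS.prop.1 hc).2⟩
  · refine hcc S (fun c hc hbot => hF c (hSF c hc) ⊤ D.top_mem ?_) ?_
    · rw [hbot, bot_inf_eq]
    · exact hS.prop.2.mono' fun _ _ => Disjoint.eq_bot
  · refine hS.prop.2.mono' fun c c' hdisj => ?_
    simpa only [hdisj.eq_bot, compl_bot] using D.top_mem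
  · exact BFilter.mem_of_maximal hD hF (fun c hc c' hc' => inf_mem_finInter_or_eq_bot hpdisj hc hc') hS
      fun c hc => le_sSup hc

/-- Let `B` be a complete Boolean algebra with the `μ⁺`-chain condition, `D` a filter
on `B`, and `G = {{P i ε : ε < μ} : i ∈ κ}` a set of independent partitions making
`(B, D, G)` a good Boolean triple (all finite intersections `A_h` of members of
distinct partitions are nonzero mod `D`, and `D` is maximal with this property).
Then every `b ∈ B` which is nonzero mod `D` is supported by a partition (mod `D`)
of `B` into at most `μ` elements of `Fin_s(G)`, each of which lies below `b` or
below its complement modulo `D`. -/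
theorem exists_supporting_partition {B : Type u} [CompleteBooleanAlgebra B]
    (μ : Cardinal.{u}) {κ : Type v}
    (hcc : ∀ T : Set B, (∀ a ∈ T, a ≠ ⊥) →
      (T.Pairwise fun a b => a ⊓ b = ⊥) → Cardinal.mk T ≤ μ)
    (P : κ → μ.out → B)
    (hpdisj : ∀ (i : κ) (ε ζ : μ.out), ε ≠ ζ → P i ε ⊓ P i ζ = ⊥)
    (hpsup : ∀ i : κ, (⨆ ε, P i ε) = ⊤)
    (D : BFilter B)
    (htriple : ∀ (s : Finset κ) (e : κ → μ.out), ∀ d ∈ D.sets,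
      (s.inf fun i => P i (e i)) ⊓ d ≠ ⊥)
    (hmax : ∀ D' : BFilter B, D.sets ⊆ D'.sets →
      (∀ (s : Finset κ) (e : κ → μ.out), ∀ d ∈ D'.sets,
        (s.inf fun i => P i (e i)) ⊓ d ≠ ⊥) →
      D'.sets = D.sets)
    (b : B) (hb : ∀ d ∈ D.sets, b ⊓ d ≠ ⊥) :
    ∃ S : Set B,
      Cardinal.mk S ≤ μ ∧
      (∀ c ∈ S, ∃ (s : Finset κ) (e : κ → μ.out), c = s.inf fun i => P i (e i)) ∧
      (∀ c ∈ S, ∀ d ∈ D.sets, c ⊓ d ≠ ⊥) ∧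
      (S.Pairwise fun c c' => (c ⊓ c')ᶜ ∈ D.sets) ∧
      sSup S ∈ D.sets ∧
      ∀ c ∈ S, (c ⊓ bᶜ)ᶜ ∈ D.sets ∨ (c ⊓ b)ᶜ ∈ D.sets :=
  exists_supporting_partition_general μ hcc P hpdisj D htriple hmax b
end

section
/- In the theory of the random graph: if μ < λ ≤ 2^μ, M is a λ⁺-saturated model of the random graph and A ⊆ M has |A| ≤ λ, then there exists B ⊆ M with |B| = μ such that every nonalgebraic complete type over A is finitely realized in B, i.e., every finite subset of such a type has a realization in B. -/
/-!
Embed `A` into `2^μ = (κ → Bool)` with `|κ| = μ`. A finite set of points of `A` is already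
separated by finitely many coordinates `E ⊆ κ`, so every finite partial type over `A` is
interpolated by a function of the form `a ↦ φ (e a ∣ E)`; there are only `μ` pairs `(E, φ)`.
Saturation realizes each of these `μ` types over `A`, and the realizations, padded to size `μ`
inside the (larger than `λ`) model, form `B`.
-/

open Cardinal Function Set

/-- Density in the product topology on `α → β`, with `β` discrete. -/
def FinitelyDense {α β : Type*} (D : Set (α → β)) : Prop :=
  ∀ (p : α → β) (F : Finset α), ∃ d ∈ D, EqOn d p F

theorem Set.InjOn.exists_comp_eqOn {α β δ : Type*} [Nonempty β] {f : α → δ} {s : Set α}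
    (hf : InjOn f s) (p : α → β) : ∃ φ : δ → β, EqOn (φ ∘ f) p s := by
  refine ⟨extend (s.domRestrict f) (s.domRestrict p) fun _ => Classical.arbitrary β,
    fun a ha => ?_⟩
  exact hf.injective.extend_apply (s.domRestrict p) _ ⟨a, ha⟩

theorem exists_finset_injOn_restrict_s14 {α κ γ : Type*} (f : α → κ → γ) (F : Finset α)
    (hf : InjOn f F) : ∃ E : Finset κ, InjOn (fun a (x : E) => f a x) F := by
  classical
  let sep : α × α → Finset κ := fun q =>
    if h : f q.1 = f q.2 then ∅ else {(ne_iff.mp h).choose}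
  refine ⟨(F ×ˢ F).biUnion sep, fun a ha a' ha' hres => hf ha ha' ?_⟩
  by_contra hne
  have hx : (ne_iff.mp hne).choose ∈ (F ×ˢ F).biUnion sep :=
    Finset.mem_biUnion.mpr ⟨(a, a'), Finset.mem_product.mpr ⟨ha, ha'⟩, by simp [sep, hne]⟩
  exact (ne_iff.mp hne).choose_spec (congrFun hres ⟨_, hx⟩)

theorem mk_sigma_finset_boolean_functions_le {κ : Type u} [Infinite κ] :
    #(Σ E : Finset κ, (E → Bool) → Bool) ≤ #κ :=
  calc #(Σ E : Finset κ, (E → Bool) → Bool)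
        = sum fun E : Finset κ => #((E → Bool) → Bool) := mk_sigma _
    _ ≤ sum fun _ : Finset κ => ℵ₀ := sum_le_sum _ _ fun _ => mk_le_aleph0
    _ = #κ := by
      rw [sum_const', mk_finset_of_infinite, mul_aleph0_eq (aleph0_le_mk κ)]

/-- The Engelking–Karłowicz theorem, for finitely many coordinates at a time. -/
theorem exists_finitelyDense_of_injective {α κ : Type u} [Infinite κ] {e : α → κ → Bool}
    (he : Injective e) : ∃ D : Set (α → Bool), #D ≤ #κ ∧ FinitelyDense D := by
  let d : (Σ E : Finset κ, (E → Bool) → Bool) → α → Bool := fun i a => i.2 fun x => e a x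
  refine ⟨range d, mk_range_le.trans mk_sigma_finset_boolean_functions_le, fun p F => ?_⟩
  obtain ⟨E, hE⟩ := exists_finset_injOn_restrict_s14 e F he.injOn
  obtain ⟨φ, hφ⟩ := hE.exists_comp_eqOn p
  exact ⟨d ⟨E, φ⟩, mem_range_self _, hφ⟩

theorem Cardinal.exists_superset_mk_eq {α : Type u} {X : Set α} {μ : Cardinal.{u}}
    (hμ : ℵ₀ ≤ μ) (hX : #X ≤ μ) (hα : μ ≤ #α) : ∃ B, X ⊆ B ∧ #B = μ := by
  obtain ⟨C, hC⟩ := le_mk_iff_exists_set.mp hα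
  refine ⟨X ∪ C, subset_union_left, le_antisymm ?_ ?_⟩
  · calc #(X ∪ C : Set α) ≤ #X + #C := mk_union_le _ _
      _ ≤ μ + μ := add_le_add hX hC.le
      _ = μ := add_eq_self hμ
  · exact hC ▸ mk_le_mk_of_subset subset_union_right

namespace SimpleGraph

variable {V : Type u} {G : SimpleGraph V} {lam : Cardinal.{u}}

/-- `λ⁺`-saturation of a model of the random graph, by quantifier elimination. -/
def IsSaturated (G : SimpleGraph V) (lam : Cardinal.{u}) : Prop :=
  ∀ S T : Set V, Disjoint S T → #(S ∪ T : Set V) ≤ lam →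
    ∃ v : V, v ∉ S ∪ T ∧ (∀ s ∈ S, G.Adj v s) ∧ ∀ t ∈ T, ¬ G.Adj v t

theorem IsSaturated.lt_mk (hG : G.IsSaturated lam) : lam < #V := by
  by_contra! hV
  obtain ⟨v, hv, -⟩ := hG ∅ univ (empty_disjoint _) (by simpa using hV)
  simp at hv

theorem IsSaturated.exists_adj_iff (hG : G.IsSaturated lam) {A : Set V} (hA : #A ≤ lam)
    (d : A → Bool) : ∃ v ∉ A, ∀ a : A, G.Adj v a ↔ d a = true := by
  let S : Set V := Subtype.val '' {a | d a = true}
  let T : Set V := Subtype.val '' {a | d a = false}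
  have hST : S ∪ T = A := by
    rw [← image_union, ← ofPred_or]
    simp
  have hdisj : Disjoint S T := by
    rw [disjoint_image_iff Subtype.val_injective, Set.disjoint_left]
    intro a ha ha'
    simp_all
  obtain ⟨v, hv, hS, hT⟩ := hG S T hdisj (hST ▸ hA)
  refine ⟨v, hST ▸ hv, fun a => ⟨fun hadj => ?_, fun ha => hS _ ⟨a, ha, rfl⟩⟩⟩
  by_contra ha
  exact hT _ ⟨a, by simpa using ha, rfl⟩ hadj

end SimpleGraph

/-- In the theory of the random graph: if `μ < λ ≤ 2^μ` (infinite cardinals), `M` is a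
`λ⁺`-saturated model of the random graph (by quantifier elimination, `λ⁺`-saturation
for a graph `G` means: for any disjoint sets `S, T` of vertices with `|S ∪ T| ≤ λ`
there is a vertex outside `S ∪ T` adjacent to everything in `S` and nothing in `T`),
and `A` is a set of vertices with `|A| ≤ λ`, then there is a set `B` of vertices with
`|B| = μ` such that every nonalgebraic complete type over `A` (determined, by
quantifier elimination, by a function `p : A → Bool` recording which of `xRa`/`¬xRa`
holds) is finitely realized in `B`: every finite subset of the type has a realization
in `B`. -/
theorem random_graph_types_finitely_realized {V : Type u} (G : SimpleGraph V)
    (μ lam : Cardinal.{u}) (hμ : Cardinal.aleph0 ≤ μ) (h1 : μ < lam)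
    (h2 : lam ≤ 2 ^ μ)
    (hsat : ∀ S T : Set V, Disjoint S T → Cardinal.mk ↥(S ∪ T) ≤ lam →
      ∃ v : V, v ∉ S ∪ T ∧ (∀ s ∈ S, G.Adj v s) ∧ ∀ t ∈ T, ¬ G.Adj v t)
    (A : Set V) (hA : Cardinal.mk A ≤ lam) :
    ∃ B : Set V, Cardinal.mk B = μ ∧
      ∀ p : A → Bool, ∀ F : Finset A, ∃ b ∈ B, ∀ a ∈ F,
        b ≠ (a : V) ∧ (G.Adj b (a : V) ↔ p a = true) := by
  have hG : G.IsSaturated lam := hsat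
  obtain ⟨κ, rfl⟩ : ∃ κ : Type u, #κ = μ := ⟨μ.out, mk_out μ⟩
  have : Infinite κ := infinite_iff.mpr hμ
  obtain ⟨e⟩ : Nonempty (A ↪ (κ → Bool)) := by
    rw [← le_def, mk_arrow, mk_bool, lift_ofNat, lift_uzero]
    exact hA.trans h2
  obtain ⟨D, hDκ, hD⟩ := exists_finitelyDense_of_injective e.injective
  choose r hrA hr using fun d : D => hG.exists_adj_iff hA d
  obtain ⟨B, hrB, hB⟩ :=
    exists_superset_mk_eq hμ (mk_range_le.trans hDκ) (h1.trans hG.lt_mk).le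
  refine ⟨B, hB, fun p F => ?_⟩
  obtain ⟨d, hd, hdp⟩ := hD p F
  refine ⟨r ⟨d, hd⟩, hrB (mem_range_self _), fun a ha => ⟨?_, ?_⟩⟩
  · exact fun h => hrA _ (h ▸ a.2)
  · exact (hr _ a).trans (by rw [← hdp ha])
end

section
/- Let D be a regular λ⁺-excellent filter on I, D₁ an ultrafilter on I extending D, B a Boolean algebra, J : P(I) → B a surjective homomorphism with D = J⁻¹({1_B}), and D* = {b ∈ B : J(A) = b implies A ∈ D₁}. Suppose ⟨a_u : u ∈ [λ]^{<ω}⟩ is a sequence of elements of D* that is multiplicative modulo D* in B and lifts to ⟨A_u⟩ ⊆ D₁ with J(A_u) = a_u. If ⟨b_u⟩ is a multiplicative refinement of ⟨a_u⟩ in B with each b_u ∈ D*, then ⟨A_u⟩ has a genuinely multiplicative refinement ⟨C_u⟩ with each C_u ∈ D₁ and C_u ⊆ A_u. -/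
open scoped Classical

universe u v w

/-!
Lift each `b_u` to a set `S_u ⊆ A_u` with `J(S_u) = b_u`. Since `J` kills exactly `D`,
`⟨S_u⟩` is multiplicative modulo `D`, i.e. the term `(x_u ⊓ x_v) ∆ x_{u ∪ v}` lies in `Λ`;
excellence then refines `⟨S_u⟩` to a genuinely multiplicative `⟨C_u⟩` with `C_u = S_u mod D`,
and `C_u ∈ D₁` because `S_u ∈ D₁` by the choice of `D*`.
-/

open scoped symmDiff

def BTerm.symmDiff {V : Type v} (s t : BTerm V) : BTerm V :=
  .sup (.inf s (.compl t)) (.inf t (.compl s))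

@[simp]
theorem BTerm.eval_symmDiff {V : Type v} {B : Type u} [BooleanAlgebra B] (f : V → B)
    (s t : BTerm V) : (s.symmDiff t).eval f = s.eval f ∆ t.eval f := by
  simp only [BTerm.symmDiff, BTerm.eval, symmDiff_eq]

section MulDefect

variable {ι : Type w} (u v : Finset ι)

noncomputable def mulDefectTerm : BTerm {w : Finset ι // w ⊆ u ∪ v} :=
  (BTerm.inf (.var ⟨u, Finset.subset_union_left⟩) (.var ⟨v, Finset.subset_union_right⟩)).symmDiff
    (.var ⟨u ∪ v, subset_rfl⟩)

@[simp]
theorem eval_mulDefectTerm {B : Type u} [BooleanAlgebra B] (f : Finset ι → B) :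
    (mulDefectTerm u v).eval (fun x => f x.1) = (f u ⊓ f v) ∆ f (u ∪ v) := by
  simp only [mulDefectTerm, BTerm.eval_symmDiff, BTerm.eval]

theorem inLambda_mulDefectTerm {I : Type u} {D : Filter I} {A : Finset ι → Set I}
    (h : ((A u ∩ A v) ∆ A (u ∪ v))ᶜ ∈ D) : InLambda D A (u ∪ v) (mulDefectTerm u v) := by
  intro w _
  simp only [eval_mulDefectTerm u v (fun x => if x ⊆ w then A x else ∅)]
  by_cases huvw : u ∪ v ⊆ w
  · obtain ⟨huw, hvw⟩ := Finset.union_subset_iff.1 huvw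
    rw [if_pos huw, if_pos hvw, if_pos huvw]
    exact h
  · have hinf : (if u ⊆ w then A u else ∅) ⊓ (if v ⊆ w then A v else ∅) = (∅ : Set I) := by
      by_cases huw : u ⊆ w
      · have hvw : ¬v ⊆ w := fun hvw => huvw (Finset.union_subset huw hvw)
        simp [hvw]
      · simp [huw]
    simp [hinf, huvw, Filter.univ_mem]

end MulDefect

theorem IsExcellent.exists_multiplicative_refinement {I : Type u} {lam : Cardinal.{w}}
    {D : Filter I} (hexc : IsExcellent lam D) {A : Finset lam.out → Set I}
    (hmult : ∀ u v, ((A u ∩ A v) ∆ A (u ∪ v))ᶜ ∈ D) :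
    ∃ C : Finset lam.out → Set I, (∀ u, C u ⊆ A u) ∧ (∀ u, {t | t ∈ A u ↔ t ∈ C u} ∈ D) ∧
      ∀ u v, C u ∩ C v = C (u ∪ v) := by
  obtain ⟨C, hCA, hCeq, hCterm⟩ := hexc A
  refine ⟨C, hCA, hCeq, fun u v => symmDiff_eq_bot.1 ?_⟩
  have hdefect := hCterm (u ∪ v) (mulDefectTerm u v) (inLambda_mulDefectTerm u v (hmult u v))
  rwa [eval_mulDefectTerm] at hdefect

section InfComplHom

variable {α β : Type*} [BooleanAlgebra α] [BooleanAlgebra β] {f : α → β}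

theorem map_sup_of_map_inf_of_map_compl (hinf : ∀ a b, f (a ⊓ b) = f a ⊓ f b)
    (hcompl : ∀ a, f aᶜ = (f a)ᶜ) (a b : α) : f (a ⊔ b) = f a ⊔ f b := by
  rw [← compl_compl (a ⊔ b), compl_sup, hcompl, hinf, hcompl, hcompl, compl_inf,
    compl_compl, compl_compl]

theorem map_symmDiff_of_map_inf_of_map_compl (hinf : ∀ a b, f (a ⊓ b) = f a ⊓ f b)
    (hcompl : ∀ a, f aᶜ = (f a)ᶜ) (a b : α) : f (a ∆ b) = f a ∆ f b := by
  simp only [symmDiff_eq, map_sup_of_map_inf_of_map_compl hinf hcompl, hinf, hcompl]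

end InfComplHom

theorem exists_le_map_eq_of_le {α β : Type*} [Lattice α] [Lattice β] {f : α → β}
    (hsurj : Function.Surjective f) (hinf : ∀ a b, f (a ⊓ b) = f a ⊓ f b) {a : α} {b : β}
    (hba : b ≤ f a) : ∃ c ≤ a, f c = b := by
  obtain ⟨c, rfl⟩ := hsurj b
  exact ⟨c ⊓ a, inf_le_right, by rw [hinf, inf_eq_left.2 hba]⟩

theorem lift_multiplicative_refinement_general {I : Type u} (lam : Cardinal.{w})
    (D : Filter I) (hexc : IsExcellent lam D)
    (D₁ : Ultrafilter I) (hD₁ : ∀ A ∈ D, A ∈ D₁)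
    {B : Type v} [BooleanAlgebra B]
    (J : Set I → B) (hsurj : Function.Surjective J)
    (hinf : ∀ A A' : Set I, J (A ∩ A') = J A ⊓ J A')
    (hcompl : ∀ A : Set I, J Aᶜ = (J A)ᶜ)
    (hker : ∀ A : Set I, A ∈ D ↔ J A = ⊤)
    (Dstar : Set B) (hDstar : Dstar = {b : B | ∀ A : Set I, J A = b → A ∈ D₁})
    (a : Finset lam.out → B)
    (A : Finset lam.out → Set I) (hJA : ∀ u, J (A u) = a u)
    (b : Finset lam.out → B) (hb : ∀ u, b u ∈ Dstar) (hba : ∀ u, b u ≤ a u)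
    (hbmult : ∀ u v : Finset lam.out, b u ⊓ b v = b (u ∪ v)) :
    ∃ C : Finset lam.out → Set I,
      (∀ u, C u ∈ D₁) ∧ (∀ u, C u ⊆ A u) ∧
      ∀ u v : Finset lam.out, C u ∩ C v = C (u ∪ v) := by
  subst hDstar
  choose S hSA hJS using fun u => exists_le_map_eq_of_le hsurj hinf ((hJA u).symm ▸ hba u)
  have hSmult : ∀ u v, ((S u ∩ S v) ∆ S (u ∪ v))ᶜ ∈ D := fun u v => by
    rw [hker, hcompl, map_symmDiff_of_map_inf_of_map_compl hinf hcompl, hinf, hJS, hJS, hJS,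
      hbmult, symmDiff_self, compl_bot]
  obtain ⟨C, hCS, hCeq, hCmult⟩ := hexc.exists_multiplicative_refinement hSmult
  refine ⟨C, fun u => ?_, fun u => (hCS u).trans (hSA u), hCmult⟩
  have hSD₁ : S u ∈ D₁ := hb u _ (hJS u)
  filter_upwards [hD₁ _ (hCeq u), hSD₁] with t hiff hSt using hiff.1 hSt

/-- (From the proof of separation of variables.)  Let `D` be a regular `λ⁺`-excellent
filter on `I`, `D₁` an ultrafilter on `I` extending `D`, `B` a Boolean algebra,
`J : 𝒫(I) → B` a surjective homomorphism with `D = J⁻¹({1_B})`, and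
`D* = {b ∈ B : J(A) = b implies A ∈ D₁}`.  Suppose `⟨a_u : u ∈ [λ]^{<ℵ₀}⟩` is a
sequence of elements of `D*` that is multiplicative modulo `D*` in `B` and lifts to
`⟨A_u⟩ ⊆ D₁` with `J(A_u) = a_u`.  If `⟨b_u⟩` is a multiplicative refinement of
`⟨a_u⟩` in `B` with each `b_u ∈ D*`, then `⟨A_u⟩` has a genuinely multiplicative
refinement `⟨C_u⟩` with each `C_u ∈ D₁` and `C_u ⊆ A_u`. -/
theorem lift_multiplicative_refinement {I : Type u} (lam : Cardinal.{w})
    (D : Filter I) (hexc : IsExcellent lam D)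
    -- regularity of `D`
    (X : lam.out → Set I) (hX : ∀ i, X i ∈ D) (hX' : ∀ t : I, {i | t ∈ X i}.Finite)
    (D₁ : Ultrafilter I) (hD₁ : ∀ A ∈ D, A ∈ D₁)
    {B : Type v} [BooleanAlgebra B]
    (J : Set I → B) (hsurj : Function.Surjective J)
    (htop : J Set.univ = ⊤) (hinf : ∀ A A' : Set I, J (A ∩ A') = J A ⊓ J A')
    (hcompl : ∀ A : Set I, J Aᶜ = (J A)ᶜ)
    (hker : ∀ A : Set I, A ∈ D ↔ J A = ⊤)
    (Dstar : Set B) (hDstar : Dstar = {b : B | ∀ A : Set I, J A = b → A ∈ D₁})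
    (a : Finset lam.out → B) (ha : ∀ u, a u ∈ Dstar)
    (hamult : ∀ u v : Finset lam.out,
      (symmDiff (a u ⊓ a v) (a (u ∪ v)))ᶜ ∈ Dstar)
    (A : Finset lam.out → Set I) (hA : ∀ u, A u ∈ D₁) (hJA : ∀ u, J (A u) = a u)
    (b : Finset lam.out → B) (hb : ∀ u, b u ∈ Dstar) (hba : ∀ u, b u ≤ a u)
    (hbmult : ∀ u v : Finset lam.out, b u ⊓ b v = b (u ∪ v)) :
    ∃ C : Finset lam.out → Set I,
      (∀ u, C u ∈ D₁) ∧ (∀ u, C u ⊆ A u) ∧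
      ∀ u v : Finset lam.out, C u ∩ C v = C (u ∪ v) :=
  lift_multiplicative_refinement_general lam D hexc D₁ hD₁ J hsurj hinf hcompl hker Dstar hDstar a A
    hJA b hb hba hbmult
end
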